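/- In the 3CNF-to-ISG reduction of the paper, restricted to a single clause c = (ℓ_1 ∨ ℓ_2 ∨ ℓ_3) with three variable players and one clause player (uniform clause-gadget rewards as specified): if a truth assignment α satisfies c and each variable player P_x schedules the literal made true by α first, then the clause player's best responses schedule all its literal-services before the low-reward service d_c; whereas if α falsifies c (each variable player schedules the false literal first), then every best response of the clause player schedules d_c in the first time slot, yielding the clause player a utility of exactly 36. -/
import Mathlib

open scoped Classical
noncomputable section

/-- The slot (1 or 2) in which the literal `ℓ_j` of clause `c` is deployed by
its variable player; `b j = true` means `ℓ_j` is scheduled first. -/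
def litSlot (b : Fin 3 → Bool) (j : Fin 3) : ℕ := if b j then 1 else 2

/-- Activation time of the clause player's service `v` (services `c₁,c₂,c₃` at
indices 0,1,2 depend on the respective literal; `d_c` is index 3). -/
def cAct (b : Fin 3 → Bool) (τ : Equiv.Perm (Fin 4)) (v : Fin 4) : ℕ :=
  if h : (v : ℕ) < 3 then max ((τ v : ℕ) + 1) (litSlot b ⟨v, h⟩) else (τ v : ℕ) + 1

/-- Rewards of the clause player's services: c₁, c₂, c₃ have reward 4, d_c has reward 3. -/
def rc : Fin 4 → ℝ := ![4, 4, 4, 3]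

/-- The clause player's utility (horizon 4). -/
def cUtil (b : Fin 3 → Bool) (τ : Equiv.Perm (Fin 4)) : ℝ :=
  ∑ v : Fin 4, rc v * ((5 - cAct b τ v : ℕ) : ℝ)


def natUtil (b : Fin 3 → Bool) (τ : Equiv.Perm (Fin 4)) : ℕ :=
  ∑ v : Fin 4, (![4, 4, 4, 3] : Fin 4 → ℕ) v * (5 - cAct b τ v)

lemma cUtil_eq (b : Fin 3 → Bool) (τ : Equiv.Perm (Fin 4)) :
    cUtil b τ = (natUtil b τ : ℕ) := by
  simp [cUtil, natUtil, rc, Fin.sum_univ_four]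

lemma key : ∀ b : Fin 3 → Bool,
    ((∃ j, b j = true) →
      ∀ τ : Equiv.Perm (Fin 4), (∀ τ' : Equiv.Perm (Fin 4), natUtil b τ' ≤ natUtil b τ) →
        ∀ j : Fin 3, (τ j.castSucc : ℕ) < τ 3) ∧
    ((∀ j, b j = false) →
      ∀ τ : Equiv.Perm (Fin 4), (∀ τ' : Equiv.Perm (Fin 4), natUtil b τ' ≤ natUtil b τ) →
        τ 3 = 0 ∧ natUtil b τ = 36) := by decide

theorem stmt_9 (b : Fin 3 → Bool) :
    -- if the assignment satisfies the clause (some literal is scheduled first),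
    -- every best response puts all literal-services before d_c
    ((∃ j, b j = true) →
      ∀ τ : Equiv.Perm (Fin 4), (∀ τ' : Equiv.Perm (Fin 4), cUtil b τ' ≤ cUtil b τ) →
        ∀ j : Fin 3, (τ j.castSucc : ℕ) < τ 3) ∧
    -- if the assignment falsifies the clause, every best response puts d_c in the
    -- first slot and yields utility exactly 36
    ((∀ j, b j = false) →
      ∀ τ : Equiv.Perm (Fin 4), (∀ τ' : Equiv.Perm (Fin 4), cUtil b τ' ≤ cUtil b τ) →
        τ 3 = 0 ∧ cUtil b τ = 36) := by
  have hle : ∀ τ' τ : Equiv.Perm (Fin 4), cUtil b τ' ≤ cUtil b τ ↔ natUtil b τ' ≤ natUtil b τ := by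
    intro τ' τ; rw [cUtil_eq, cUtil_eq, Nat.cast_le]
  obtain ⟨h1, h2⟩ := key b
  constructor
  · intro hb τ hτ
    exact h1 hb τ (fun τ' => (hle τ' τ).1 (hτ τ'))
  · intro hb τ hτ
    obtain ⟨h3, h4⟩ := h2 hb τ (fun τ' => (hle τ' τ).1 (hτ τ'))
    refine ⟨h3, ?_⟩
    rw [cUtil_eq, h4]; norm_num
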